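/- arXiv:2003.03725 — 2 statements merged into one kernel-verified Lean document; each statement's English description precedes it below -/
import Mathlib

section
/- Let 1 < p < 2 and let a, b be vectors in R^n (not both zero). Define g = |a − b|^2 / (|a| + |b|)^{2−p}. Then |a − b| ≤ 2 (g^{1/p} + g^{1/2} |a|^{(2−p)/2}). -/
/-!
With `d = |a - b|` and `s = |a| + |b|` one has `g ^ (1/2) |a| ^ ((2-p)/2) = d (|a|/s) ^ ((2-p)/2)`
and `g ^ (1/p) = d (d/s) ^ ((2-p)/p)`. If `|b| ≤ 3|a|` then `s ≤ 4|a|`, and since `(2-p)/2 ≤ 1/2`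
the first factor is at least `4 ^ (-1/2) = 1/2`. Otherwise `s < 2d` (as `d ≥ |b| - |a|`), and since
`(2-p)/p ≤ 1` the second factor is at least `2 ^ (-1) = 1/2`. Either way one term is at least `d/2`.
-/

open Real

lemma half_le_mul_rpow_div {d x y k e : ℝ} (hd : 0 ≤ d) (hx : 0 < x) (hy : 0 < y)
    (hxy : x ≤ k * y) (he : 0 ≤ e) (hke : k ^ e ≤ 2) :
    d / 2 ≤ d * (y / x) ^ e := by
  have hxy' : (x / y) ^ e ≤ 2 :=
    (rpow_le_rpow (by positivity) ((div_le_iff₀ hy).2 hxy) he).trans hke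
  have hpos : 0 < (x / y) ^ e := by positivity
  rw [← inv_div x y, inv_rpow (by positivity), div_eq_mul_inv d 2]
  exact mul_le_mul_of_nonneg_left (inv_anti₀ hpos hxy') hd

lemma sq_div_rpow_rpow_half {d s : ℝ} (hd : 0 ≤ d) (hs : 0 ≤ s) (c : ℝ) :
    (d ^ 2 / s ^ c) ^ (1 / 2 : ℝ) = d / s ^ (c / 2) := by
  rw [div_rpow (by positivity) (by positivity), ← rpow_natCast, ← rpow_mul hd, ← rpow_mul hs]
  norm_num [div_eq_mul_inv]

lemma sq_div_rpow_rpow_inv {d s p : ℝ} (hd : 0 ≤ d) (hs : 0 ≤ s) (hp : p ≠ 0) :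
    (d ^ 2 / s ^ (2 - p)) ^ (1 / p) = d * (d / s) ^ ((2 - p) / p) := by
  have hexp : 2 * (1 / p) = 1 + (2 - p) / p := by field_simp; ring
  rw [div_rpow (by positivity) (by positivity), ← rpow_natCast, ← rpow_mul hd, ← rpow_mul hs,
    div_rpow hd hs, Nat.cast_ofNat, hexp, rpow_add' hd (by field_simp; simpa using hp), rpow_one,
    mul_div_assoc, ← mul_one_div (2 - p)]

theorem stmt0_general {n : ℕ} (p : ℝ) (hp1 : 1 < p) (hp2 : p < 2)
    (a b : EuclideanSpace ℝ (Fin n))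
    (g : ℝ) (hg : g = ‖a - b‖ ^ (2 : ℕ) / (‖a‖ + ‖b‖) ^ (2 - p)) :
    ‖a - b‖ ≤ 2 * (g ^ (1 / p) + g ^ (1 / 2 : ℝ) * ‖a‖ ^ ((2 - p) / 2)) := by
  set d := ‖a - b‖
  set s := ‖a‖ + ‖b‖
  have hds : d ≤ s := norm_sub_le a b
  have hg0 : 0 ≤ g := hg ▸ by positivity
  have hterm1 : 0 ≤ g ^ (1 / p) := by positivity
  have hterm2 : 0 ≤ g ^ (1 / 2 : ℝ) * ‖a‖ ^ ((2 - p) / 2) := by positivity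
  rcases (norm_nonneg (a - b)).eq_or_lt with hd0 | hd
  · change 0 = d at hd0
    linarith
  have hs : 0 < s := hd.trans_le hds
  rcases le_or_gt ‖b‖ (3 * ‖a‖) with hba | hab
  · have ha : 0 < ‖a‖ := by linarith [norm_nonneg b]
    have key : d / 2 ≤ g ^ (1 / 2 : ℝ) * ‖a‖ ^ ((2 - p) / 2) := by
      rw [hg, sq_div_rpow_rpow_half hd.le hs.le, div_mul_eq_mul_div, mul_div_assoc,
        ← div_rpow ha.le hs.le]
      refine half_le_mul_rpow_div hd.le hs ha (k := 4) (by linarith) (by linarith) ?_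
      calc (4 : ℝ) ^ ((2 - p) / 2) ≤ 4 ^ (1 / 2 : ℝ) :=
            rpow_le_rpow_of_exponent_le (by norm_num) (by linarith)
        _ = 2 := by
            rw [show (4 : ℝ) = 2 ^ (2 : ℝ) by norm_num, ← rpow_mul (by norm_num)]
            norm_num
    linarith
  · have hba : ‖b‖ - ‖a‖ ≤ d := (norm_sub_norm_le b a).trans_eq (norm_sub_rev b a)
    have key : d / 2 ≤ g ^ (1 / p) := by
      rw [hg, sq_div_rpow_rpow_inv hd.le hs.le (by linarith)]
      refine half_le_mul_rpow_div hd.le hs hd (k := 2) (by linarith [norm_nonneg a])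
        (div_nonneg (by linarith) (by linarith)) ?_
      calc (2 : ℝ) ^ ((2 - p) / p) ≤ 2 ^ (1 : ℝ) :=
            rpow_le_rpow_of_exponent_le (by norm_num) ((div_le_one (by linarith)).2 (by linarith))
        _ = 2 := rpow_one 2
    linarith

theorem stmt0 {n : ℕ} (p : ℝ) (hp1 : 1 < p) (hp2 : p < 2)
    (a b : EuclideanSpace ℝ (Fin n)) (hab : ¬(a = 0 ∧ b = 0))
    (g : ℝ) (hg : g = ‖a - b‖ ^ (2 : ℕ) / (‖a‖ + ‖b‖) ^ (2 - p)) :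
    ‖a - b‖ ≤ 2 * (g ^ (1 / p) + g ^ (1 / 2 : ℝ) * ‖a‖ ^ ((2 - p) / 2)) :=
  stmt0_general p hp1 hp2 a b g hg
end

section
/- Let μ be a finite positive Borel measure on R^n and let ρ_ε be a smooth mollifier supported in B_ε(0) with ∫ρ_ε = 1 and ρ_ε(x) = ε^{−n}ρ(x/ε) for a radial nonnegative ρ ∈ C_c^∞(B₁(0)). Then for every x ∈ R^n and every ε > 0, M₁(ρ_ε * μ)(x) ≤ C(n) · M(M₁μ)(x), where M is the Hardy–Littlewood maximal operator. -/
open MeasureTheory Metric ENNReal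

open Set

local notation "E" n => EuclideanSpace ℝ (Fin n)



-- 1. rotation invariance
lemma radial_setLIntegral_ball {n : ℕ} (g : (E n) → ℝ≥0∞)
    (hg : ∀ v v' : E n, ‖v‖ = ‖v'‖ → g v = g v') {p w : E n} (h : ‖p‖ = ‖w‖) (r : ℝ) :
    ∫⁻ v in ball p r, g v = ∫⁻ v in ball w r, g v := by
  set e : (E n) ≃ₗᵢ[ℝ] (E n) := Submodule.reflection (ℝ ∙ (w - p))ᗮ with he
  have hew : e w = p := Submodule.reflection_sub h.symm
  have hmp : MeasurePreserving e volume volume := e.measurePreserving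
  have hemb : MeasurableEmbedding e := e.toHomeomorph.measurableEmbedding
  have hpre : (⇑e) ⁻¹' (ball p r) = ball w r := by
    ext a
    simp only [mem_preimage, mem_ball]
    rw [← hew, e.dist_map]
  have := hmp.setLIntegral_comp_preimage_emb hemb g (ball p r)
  rw [hpre] at this
  rw [← this]
  refine setLIntegral_congr_fun measurableSet_ball ?_
  exact fun a _ => hg _ _ (e.norm_map a)

-- 2. existence of maximal separated net
lemma exists_net {n : ℕ} {s r : ℝ} (hr : 0 < r) :
    ∃ P : Set (E n), P ⊆ sphere 0 s ∧ (P.Pairwise fun p q => 2*r ≤ dist p q) ∧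
      ∀ q ∈ sphere (0 : E n) s, ∃ p ∈ P, dist q p < 2*r := by
  set S : Set (Set (E n)) := {P | P ⊆ sphere 0 s ∧ P.Pairwise fun p q => 2*r ≤ dist p q} with hS
  obtain ⟨M, hM⟩ : ∃ M, Maximal (· ∈ S) M := by
    apply zorn_subset
    intro c hc hchain
    refine ⟨⋃₀ c, ⟨?_, ?_⟩, fun t ht => subset_sUnion_of_mem ht⟩
    · exact sUnion_subset fun t ht => (hc ht).1
    · intro p hp q hq hpq
      obtain ⟨a, hac, hpa⟩ := hp
      obtain ⟨b, hbc, hqb⟩ := hq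
      rcases hchain.total hac hbc with hab | hba
      · exact (hc hbc).2 (hab hpa) hqb hpq
      · exact (hc hac).2 hpa (hba hqb) hpq
  refine ⟨M, hM.1.1, hM.1.2, ?_⟩
  intro q hq
  by_contra hcon
  push_neg at hcon
  have hqM : q ∉ M := by
    intro hqM
    have := hcon q hqM
    simp at this
    nlinarith [this]
  have hins : insert q M ∈ S := by
    constructor
    · exact insert_subset hq hM.1.1
    · refine @Set.Pairwise.insert_of_symmetric _ _ _ _ ⟨?_⟩ hM.1.2 ?_
      · intro a b hab
        rw [dist_comm] at hab; exact hab
      · intro p hpM _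
        exact hcon p hpM
  have := hM.2 hins (subset_insert q M)
  exact hqM (this (mem_insert q M))

-- 3. a^n - c^n ≥ (a-c) a^(n-1)
lemma pow_sub_pow_ge {a c : ℝ} (n : ℕ) (hn : 1 ≤ n) (hc : 0 ≤ c) (hca : c ≤ a) :
    (a - c) * a^(n-1) ≤ a^n - c^n := by
  obtain ⟨m, rfl⟩ := Nat.exists_eq_add_of_le hn
  have hm : 1 + m - 1 = m := by omega
  have hm2 : 1 + m = m + 1 := by omega
  rw [hm, hm2, pow_succ, pow_succ]
  have h1 : c ^ m ≤ a ^ m := pow_le_pow_left₀ hc hca m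
  nlinarith [pow_nonneg hc m, pow_nonneg (hc.trans hca) m]

-- 5. dyadic shell existence
lemma shell_exists {t : ℝ} (h0 : 0 < t) (h1 : t ≤ 1) :
    ∃ k : ℕ, 1/2^(k+1) < t ∧ t ≤ 1/2^k := by
  have hex : ∃ k : ℕ, (1:ℝ)/2^(k+1) < t := by
    obtain ⟨k, hk⟩ := pow_unbounded_of_one_lt (1/t) (by norm_num : (1:ℝ) < 2)
    refine ⟨k, ?_⟩
    have hk' : 1 < t * 2^k := by
      rw [div_lt_iff₀ h0] at hk; linarith
    rw [div_lt_iff₀ (by positivity)]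
    have h2 : (2:ℝ)^k ≤ 2^(k+1) := by
      apply pow_le_pow_right₀ (by norm_num) (by omega)
    nlinarith
  classical
  set k := Nat.find hex with hk
  refine ⟨k, Nat.find_spec hex, ?_⟩
  rcases Nat.eq_zero_or_pos k with h | h
  · rw [h]; simpa using h1
  · have := Nat.find_min hex (m := k - 1) (by omega)
    push_neg at this
    have hkk : k - 1 + 1 = k := by omega
    rwa [hkk] at this

lemma shell_bound {n : ℕ} (hn : 1 ≤ n) (g : (E n) → ℝ≥0∞) (hgm : Measurable g)
    (hg : ∀ v v' : E n, ‖v‖ = ‖v'‖ → g v = g v') {r : ℝ} (hr : 0 < r) {w : E n}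
    (hw : 3*r ≤ ‖w‖) :
    ENNReal.ofReal (2*r*‖w‖^(n-1)/(3*r)^n) * ∫⁻ v in ball w r, g v ≤ ∫⁻ v, g v := by
  set s := ‖w‖ with hs
  have hs0 : 0 < s := by linarith
  by_cases hI : (∫⁻ v, g v) = ∞
  · rw [hI]; exact le_top
  set Ψ := ∫⁻ v in ball w r, g v with hΨ
  obtain ⟨P, hPs, hPsep, hPcov⟩ := exists_net (n := n) (s := s) hr
  have hnorm : ∀ p ∈ P, ‖p‖ = s := by
    intro p hp
    have := hPs hp
    rwa [mem_sphere_zero_iff_norm] at this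
  have hball : ∀ p ∈ P, (∫⁻ v in ball p r, g v) = Ψ :=
    fun p hp => radial_setLIntegral_ball g hg (by rw [hnorm p hp]) r
  have hdisj : P.PairwiseDisjoint (fun p => ball p r) := by
    intro p hp q hq hpq
    exact ball_disjoint_ball (by linarith [hPsep hp hq hpq])
  set ν := volume.withDensity g with hν
  have hνball : ∀ p ∈ P, ν (ball p r) = Ψ := by
    intro p hp
    rw [hν, withDensity_apply g measurableSet_ball, hball p hp]
  have hνuniv : ν univ = ∫⁻ v, g v := by
    rw [hν, withDensity_apply g MeasurableSet.univ, Measure.restrict_univ]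
  by_cases hPfin : P.Finite
  case neg =>
    -- infinite: Ψ = 0
    have hΨ0 : Ψ = 0 := by
      by_contra hΨ0
      set f := Set.Infinite.natEmbedding P hPfin
      have : ν (⋃ i : ℕ, ball ((f i : E n)) r) = ∑' i : ℕ, ν (ball ((f i : E n)) r) := by
        apply measure_iUnion
        · intro i j hij
          exact hdisj (f i).2 (f j).2 (fun h => hij (f.injective (Subtype.ext h)))
        · intro i; exact measurableSet_ball
      have htop : (∑' i : ℕ, ν (ball ((f i : E n)) r)) = ∞ := by
        have : ∀ i : ℕ, ν (ball ((f i : E n)) r) = Ψ := fun i => hνball _ (f i).2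
        simp_rw [this]
        exact ENNReal.tsum_const_eq_top_of_ne_zero hΨ0
      have hle : ν (⋃ i : ℕ, ball ((f i : E n)) r) ≤ ν univ := measure_mono (subset_univ _)
      rw [this, htop, hνuniv] at hle
      exact hI (top_le_iff.mp hle)
    rw [hΨ0, mul_zero]
    exact zero_le ..
  case pos =>
    classical
    set F := hPfin.toFinset with hF
    set N := F.card with hNdef
    -- sum of ball measures
    have hsum : (N : ℝ≥0∞) * Ψ ≤ ∫⁻ v, g v := by
      have h1 : ∑ p ∈ F, ν (ball p r) = ν (⋃ p ∈ F, ball p r) := by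
        refine (measure_biUnion_finset ?_ fun p _ => measurableSet_ball).symm
        intro p hp q hq hpq
        exact hdisj (hPfin.mem_toFinset.mp hp) (hPfin.mem_toFinset.mp hq) hpq
      have h2 : ∑ p ∈ F, ν (ball p r) = (N : ℝ≥0∞) * Ψ := by
        rw [Finset.sum_congr rfl (fun p hp => hνball p (hPfin.mem_toFinset.mp hp)),
          Finset.sum_const, nsmul_eq_mul]
      rw [← h2, h1, ← hνuniv]
      exact measure_mono (subset_univ _)
    -- covering bound : vol(ball (s+r)) ≤ vol(closedBall (s-r)) + N * vol(ball 3r)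
    set v₁ := volume (ball (0 : E n) 1) with hv₁
    have hv₁0 : v₁ ≠ 0 := (measure_ball_pos volume 0 one_pos).ne'
    have hv₁top : v₁ ≠ ∞ := measure_ball_lt_top.ne
    have hcov : ball (0 : E n) (s+r) \ closedBall 0 (s-r) ⊆ ⋃ p ∈ F, ball p (3*r) := by
      intro v hv
      obtain ⟨hv1, hv2⟩ := hv
      rw [mem_ball_zero_iff] at hv1
      rw [mem_closedBall_zero_iff] at hv2
      push_neg at hv2
      have hvn0 : 0 < ‖v‖ := by linarith
      set q : E n := (s/‖v‖) • v with hq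
      have hqs : q ∈ sphere (0 : E n) s := by
        rw [mem_sphere_zero_iff_norm, hq, norm_smul, Real.norm_eq_abs,
          abs_of_pos (by positivity), div_mul_cancel₀]
        exact hvn0.ne'
      have hdvq : dist v q < r := by
        rw [dist_eq_norm, hq]
        have : v - (s/‖v‖) • v = (1 - s/‖v‖) • v := by
          rw [sub_smul, one_smul]
        rw [this, norm_smul, Real.norm_eq_abs]
        have : |1 - s/‖v‖| * ‖v‖ = |‖v‖ - s| := by
          rw [← abs_of_pos hvn0, ← abs_mul]
          congr 1
          field_simp
          rw [abs_of_pos hvn0]; ring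
        rw [this, abs_lt]
        constructor <;> linarith
      obtain ⟨p, hpP, hdqp⟩ := hPcov q hqs
      refine mem_biUnion (hPfin.mem_toFinset.mpr hpP) ?_
      rw [mem_ball]
      calc dist v p ≤ dist v q + dist q p := dist_triangle v q p
        _ < r + 2*r := by linarith
        _ = 3*r := by ring
    have hmeas1 : volume (ball (0 : E n) (s+r)) ≤
        volume (closedBall (0 : E n) (s-r)) + (N : ℝ≥0∞) * (ENNReal.ofReal ((3*r)^n) * v₁) := by
      calc volume (ball (0 : E n) (s+r))
          ≤ volume (closedBall (0 : E n) (s-r) ∪ (ball (0 : E n) (s+r) \ closedBall 0 (s-r))) := by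
            apply measure_mono
            intro v hv
            by_cases h : v ∈ closedBall (0 : E n) (s-r)
            · exact Or.inl h
            · exact Or.inr ⟨hv, h⟩
        _ ≤ volume (closedBall (0 : E n) (s-r)) +
              volume (ball (0 : E n) (s+r) \ closedBall 0 (s-r)) := measure_union_le _ _
        _ ≤ volume (closedBall (0 : E n) (s-r)) + (N : ℝ≥0∞) * (ENNReal.ofReal ((3*r)^n) * v₁) := by
            gcongr
            calc volume (ball (0 : E n) (s+r) \ closedBall 0 (s-r))
                ≤ volume (⋃ p ∈ F, ball p (3*r)) := measure_mono hcov
              _ ≤ ∑ p ∈ F, volume (ball p (3*r)) := measure_biUnion_finset_le F _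
              _ = (N : ℝ≥0∞) * (ENNReal.ofReal ((3*r)^n) * v₁) := by
                  have : ∀ p : E n, volume (ball p (3*r)) = ENNReal.ofReal ((3*r)^n) * v₁ := by
                    intro p
                    rw [Measure.addHaar_ball_of_pos volume p (by positivity)]
                    congr
                    exact finrank_euclideanSpace_fin
                  simp_rw [this, Finset.sum_const, nsmul_eq_mul]
                  rfl
    -- convert to real inequality for N
    have hsr0 : (0:ℝ) ≤ s - r := by linarith
    have hvol1 : volume (ball (0 : E n) (s+r)) = ENNReal.ofReal ((s+r)^n) * v₁ := by
      rw [Measure.addHaar_ball_of_pos volume _ (by positivity)]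
      congr
      exact finrank_euclideanSpace_fin
    have hvol2 : volume (closedBall (0 : E n) (s-r)) = ENNReal.ofReal ((s-r)^n) * v₁ := by
      rw [Measure.addHaar_closedBall volume _ hsr0]
      congr
      exact finrank_euclideanSpace_fin
    rw [hvol1, hvol2] at hmeas1
    have hmeas2 : ENNReal.ofReal ((s+r)^n) ≤
        ENNReal.ofReal ((s-r)^n) + (N : ℝ≥0∞) * ENNReal.ofReal ((3*r)^n) := by
      rw [← ENNReal.mul_le_mul_iff_left hv₁0 hv₁top, add_mul, mul_assoc]
      exact hmeas1
    have hreal : (s+r)^n ≤ (s-r)^n + (N:ℝ) * (3*r)^n := by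
      have : ENNReal.ofReal ((s-r)^n) + (N : ℝ≥0∞) * ENNReal.ofReal ((3*r)^n)
          = ENNReal.ofReal ((s-r)^n + (N:ℝ) * (3*r)^n) := by
        rw [ENNReal.ofReal_add (by positivity) (by positivity), ← ENNReal.ofReal_natCast N,
          ← ENNReal.ofReal_mul (by positivity)]
      rw [this] at hmeas2
      exact (ENNReal.ofReal_le_ofReal_iff (by positivity)).mp hmeas2
    have hNge : 2*r*s^(n-1)/(3*r)^n ≤ (N:ℝ) := by
      rw [div_le_iff₀ (by positivity)]
      have h1 : ((s+r) - (s-r)) * (s+r)^(n-1) ≤ (s+r)^n - (s-r)^n :=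
        pow_sub_pow_ge n hn hsr0 (by linarith)
      have h2 : s^(n-1) ≤ (s+r)^(n-1) := pow_le_pow_left₀ hs0.le (by linarith) _
      nlinarith [pow_nonneg (by positivity : (0:ℝ) ≤ s) (n-1)]
    calc ENNReal.ofReal (2*r*s^(n-1)/(3*r)^n) * Ψ ≤ (N : ℝ≥0∞) * Ψ := by
          gcongr
          rw [← ENNReal.ofReal_natCast N]
          exact ENNReal.ofReal_le_ofReal hNge
      _ ≤ ∫⁻ v, g v := hsum

/-- The first-order fractional maximal function of a measure. -/
noncomputable def fracMax1 {n : ℕ} (μ : Measure (EuclideanSpace ℝ (Fin n)))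
    (x : EuclideanSpace ℝ (Fin n)) : ℝ≥0∞ :=
  ⨆ (ρ : ℝ) (_ : 0 < ρ), μ (ball x ρ) / ENNReal.ofReal (ρ ^ (n - 1))

/-- The mollification kernel as an `ℝ≥0∞`-valued function. -/
noncomputable def mollK (n : ℕ) (ρ : (E n) → ℝ) (ε : ℝ) (v : E n) : ℝ≥0∞ :=
  ENNReal.ofReal ((ε^n)⁻¹ * ρ (ε⁻¹ • v))

set_option maxHeartbeats 2000000 in
theorem stmt11 (n : ℕ) (hn : 1 ≤ n) :
    ∃ C > (0 : ℝ), ∀ μ : Measure (EuclideanSpace ℝ (Fin n)), IsFiniteMeasure μ →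
      ∀ ρ : EuclideanSpace ℝ (Fin n) → ℝ, ContDiff ℝ (⊤ : ℕ∞) ρ → (∀ v, 0 ≤ ρ v) →
        Function.support ρ ⊆ ball 0 1 → (∫ v, ρ v = 1) →
        (∀ v v' : EuclideanSpace ℝ (Fin n), ‖v‖ = ‖v'‖ → ρ v = ρ v') →
        ∀ ε : ℝ, 0 < ε → ∀ x : EuclideanSpace ℝ (Fin n),
          (⨆ (r : ℝ) (_ : 0 < r),
              (∫⁻ y in ball x r,
                  ∫⁻ z, ENNReal.ofReal ((ε ^ n)⁻¹ * ρ (ε⁻¹ • (y - z))) ∂μ) /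
                ENNReal.ofReal (r ^ (n - 1))) ≤
          ENNReal.ofReal C *
            ⨆ (r : ℝ) (_ : 0 < r),
              (∫⁻ y in ball x r, fracMax1 μ y) / volume (ball x r) := by
  obtain ⟨m, rfl⟩ : ∃ m, n = m + 1 := ⟨n - 1, by omega⟩
  set K : ℝ := 9^m + 3^(m+1) * (16/3)^m with hK
  have hKpos : 0 < K := by positivity
  refine ⟨K * 2^m, by positivity, ?_⟩
  intro μ hμfin ρ hρsm hρnn hρsupp hρint hρrad ε hε x
  simp only [Nat.add_sub_cancel]
  set f : (E (m+1)) → ℝ≥0∞ := mollK (m+1) ρ ε with hf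
  set A : ℝ≥0∞ := fracMax1 μ x with hA
  set S : ℝ≥0∞ := ⨆ (r : ℝ) (_ : 0 < r),
      (∫⁻ y in ball x r, fracMax1 μ y) / volume (ball x r) with hS
  -- basic facts about ρ and f
  have hρc : Continuous ρ := hρsm.continuous
  have hρzero : ∀ v : E (m+1), 1 ≤ ‖v‖ → ρ v = 0 := by
    intro v hv
    by_contra h
    have := mem_ball_zero_iff.mp (hρsupp (Function.mem_support.mpr h))
    linarith
  have hfm : Measurable f := by
    rw [hf]
    unfold mollK
    exact (continuous_const.mul (hρc.comp (continuous_const_smul ε⁻¹))).measurable.ennreal_ofReal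
  have hfrad : ∀ v v' : E (m+1), ‖v‖ = ‖v'‖ → f v = f v' := by
    intro v v' h
    rw [hf]
    unfold mollK
    rw [hρrad (ε⁻¹ • v) (ε⁻¹ • v') (by rw [norm_smul, norm_smul, h])]
  have hfsupp : ∀ v : E (m+1), ε ≤ ‖v‖ → f v = 0 := by
    intro v hv
    rw [hf]
    unfold mollK
    rw [hρzero, mul_zero, ENNReal.ofReal_zero]
    rw [norm_smul, Real.norm_eq_abs, abs_of_pos (inv_pos.mpr hε)]
    rw [← inv_mul_cancel₀ hε.ne']
    exact mul_le_mul_of_nonneg_left hv (by positivity)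
  -- total integral of f is 1
  have hfint : ∫⁻ v, f v = 1 := by
    have hGcs : HasCompactSupport (fun v : E (m+1) => ρ (ε⁻¹ • v)) := by
      apply HasCompactSupport.intro (isCompact_closedBall (0 : E (m+1)) ε)
      intro v hv
      rw [mem_closedBall_zero_iff] at hv
      push_neg at hv
      apply hρzero
      rw [norm_smul, Real.norm_eq_abs, abs_of_pos (inv_pos.mpr hε)]
      rw [← inv_mul_cancel₀ hε.ne']
      exact mul_le_mul_of_nonneg_left hv.le (by positivity)
    have hGint : Integrable (fun v : E (m+1) => ρ (ε⁻¹ • v)) :=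
      (hρc.comp (continuous_const_smul ε⁻¹)).integrable_of_hasCompactSupport hGcs
    have hGval : ∫ v : E (m+1), ρ (ε⁻¹ • v) = ε^(m+1) := by
      rw [Measure.integral_comp_inv_smul volume ρ ε, hρint, smul_eq_mul, mul_one,
        finrank_euclideanSpace_fin, abs_of_pos (by positivity)]
    have hFint : Integrable (fun v : E (m+1) => (ε^(m+1))⁻¹ * ρ (ε⁻¹ • v)) := hGint.const_mul _
    have : ∫⁻ v, f v = ENNReal.ofReal (∫ v : E (m+1), (ε^(m+1))⁻¹ * ρ (ε⁻¹ • v)) := by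
      rw [ofReal_integral_eq_lintegral_ofReal hFint
        (ae_of_all _ (fun v => mul_nonneg (by positivity) (hρnn _)))]
      rfl
    rw [this, integral_const_mul, hGval, inv_mul_cancel₀ (by positivity), ENNReal.ofReal_one]
  -- the fracMax1 bound at x
  have hAb : ∀ t : ℝ, 0 < t → μ (ball x t) ≤ A * ENNReal.ofReal (t^m) := by
    intro t ht
    have h1 : μ (ball x t) / ENNReal.ofReal (t^m) ≤ A := by
      rw [hA]
      unfold fracMax1
      simp only [Nat.add_sub_cancel]
      exact le_iSup₂ (f := fun (t : ℝ) (_ : 0 < t) => μ (ball x t) / ENNReal.ofReal (t ^ m)) t ht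
    rw [← ENNReal.div_le_iff_le_mul (Or.inl (ENNReal.ofReal_pos.mpr (by positivity)).ne')
      (Or.inl ENNReal.ofReal_ne_top)]
    exact h1
  -- dyadic shells
  set Sh : ℕ → Set (E (m+1)) := fun k => {v | ε/2^(k+1) < ‖v‖ ∧ ‖v‖ ≤ ε/2^k} with hSh
  have hShm : ∀ k, MeasurableSet (Sh k) := by
    intro k
    apply MeasurableSet.inter
    · exact (isOpen_lt continuous_const continuous_norm).measurableSet
    · exact (isClosed_le continuous_norm continuous_const).measurableSet
  set g : ℕ → (E (m+1)) → ℝ≥0∞ := fun k => (Sh k).indicator f with hg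
  have hgm : ∀ k, Measurable (g k) := fun k => hfm.indicator (hShm k)
  have hgrad : ∀ k, ∀ v v' : E (m+1), ‖v‖ = ‖v'‖ → g k v = g k v' := by
    intro k v v' h
    have hmem : v ∈ Sh k ↔ v' ∈ Sh k := by
      simp only [hSh, mem_setOf_eq, h]
    by_cases hv : v ∈ Sh k
    · rw [hg]
      simp only [indicator_of_mem hv, indicator_of_mem (hmem.mp hv)]
      exact hfrad v v' h
    · rw [hg]
      simp only [indicator_of_notMem hv, indicator_of_notMem (fun h' => hv (hmem.mpr h'))]
  have hsum_le : ∀ v, (∑' k, g k v) ≤ f v := by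
    intro v
    by_cases hv : ∃ k, v ∈ Sh k
    · obtain ⟨k, hk⟩ := hv
      have huniq : ∀ j, j ≠ k → g j v = 0 := by
        intro j hj
        rw [hg]
        apply indicator_of_notMem
        intro hjv
        rcases lt_or_gt_of_ne hj with hlt | hgt
        · -- j < k : ε/2^(j+1) < ‖v‖ ≤ ε/2^k ≤ ε/2^(j+1)
          have h1 : ε/2^k ≤ ε/2^(j+1) := by
            apply div_le_div_of_nonneg_left hε.le (by positivity)
            apply pow_le_pow_right₀ (by norm_num)
            omega
          have := hjv.1
          have := hk.2
          simp only [hSh, mem_setOf_eq] at *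
          linarith
        · have h1 : ε/2^j ≤ ε/2^(k+1) := by
            apply div_le_div_of_nonneg_left hε.le (by positivity)
            apply pow_le_pow_right₀ (by norm_num)
            omega
          have := hjv.2
          have := hk.1
          simp only [hSh, mem_setOf_eq] at *
          linarith
      rw [tsum_eq_single k huniq, hg]
      simp only [indicator_of_mem hk]
      exact le_refl _
    · push_neg at hv
      have : ∀ k, g k v = 0 := fun k => indicator_of_notMem (hv k) f
      simp only [this, tsum_zero]
      exact zero_le ..
  have hsum_eq : ∀ v : E (m+1), v ≠ 0 → (∑' k, g k v) = f v := by
    intro v hv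
    by_cases hvε : ε < ‖v‖
    · have hf0 : f v = 0 := hfsupp v hvε.le
      refine le_antisymm (hsum_le v) ?_
      rw [hf0]
      exact zero_le ..
    · push_neg at hvε
      have hv0 : 0 < ‖v‖ := by
        rw [norm_pos_iff]
        exact hv
      obtain ⟨k, hk1, hk2⟩ := shell_exists (t := ‖v‖/ε) (by positivity)
        ((div_le_one hε).mpr hvε)
      have hkv : v ∈ Sh k := by
        simp only [hSh, mem_setOf_eq]
        rw [div_lt_div_iff₀ (by positivity) hε] at hk1
        rw [div_le_div_iff₀ hε (by positivity)] at hk2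
        constructor
        · rw [div_lt_iff₀ (by positivity)]
          linarith
        · rw [le_div_iff₀ (by positivity)]
          linarith
      apply le_antisymm (hsum_le v)
      calc f v = g k v := by rw [hg]; simp only [indicator_of_mem hkv]
        _ ≤ ∑' j, g j v := ENNReal.le_tsum k
  set mk : ℕ → ℝ≥0∞ := fun k => ∫⁻ v, g k v with hmk
  have hmksum : ∑' k, mk k ≤ 1 := by
    rw [hmk]
    calc ∑' k, ∫⁻ v, g k v = ∫⁻ v, ∑' k, g k v :=
          (lintegral_tsum (fun k => (hgm k).aemeasurable)).symm
      _ ≤ ∫⁻ v, f v := lintegral_mono hsum_le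
      _ = 1 := hfint
  -- measurability of the per-shell averaged integrals
  have hHm : ∀ (r : ℝ) (k : ℕ), Measurable fun z : E (m+1) => ∫⁻ u in ball (x - z) r, g k u := by
    intro r k
    have heq : ∀ z : E (m+1), (∫⁻ u in ball (x - z) r, g k u)
        = ∫⁻ u, ((ball (x - z) r).indicator (g k)) u := fun z =>
      (lintegral_indicator measurableSet_ball _).symm
    simp_rw [heq]
    have hset : MeasurableSet {p : (E (m+1)) × (E (m+1)) | dist p.2 (x - p.1) < r} :=
      (isOpen_lt (continuous_snd.dist (continuous_const.sub continuous_fst))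
        continuous_const).measurableSet
    refine Measurable.lintegral_prod_right (ν := (volume : Measure (E (m+1))))
      (f := fun (z u : E (m+1)) => (ball (x - z) r).indicator (g k) u) ?_
    exact ((hgm k).comp measurable_snd).indicator hset
  -- splitting over shells
  have hsplit : ∀ (r : ℝ) (w : E (m+1)), (∫⁻ u in ball w r, f u)
      = ∑' k, ∫⁻ u in ball w r, g k u := by
    intro r w
    have hae : (∫⁻ u in ball w r, f u) = ∫⁻ u in ball w r, ∑' k, g k u := by
      apply lintegral_congr_ae
      apply ae_restrict_of_ae
      rw [ae_iff]
      apply measure_mono_null (t := ({0} : Set (E (m+1))))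
      · intro v hv
        simp only [mem_setOf_eq] at hv
        by_contra hne
        simp only [mem_singleton_iff] at hne
        exact hv (hsum_eq v hne).symm
      · exact measure_singleton 0
    rw [hae, lintegral_tsum (fun k => (hgm k).aemeasurable)]
  -- the per-radius estimate
  have hmain : ∀ r : ℝ, 0 < r →
      (∫⁻ y in ball x r, ∫⁻ z, f (y - z) ∂μ) ≤ (ENNReal.ofReal K * A) * ENNReal.ofReal (r^m) := by
    intro r hr
    have hmeasYZ : Measurable (Function.uncurry fun (y z : E (m+1)) => f (y - z)) :=
      hfm.comp (measurable_fst.sub measurable_snd)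
    have hswap : (∫⁻ y in ball x r, ∫⁻ z, f (y - z) ∂μ) =
        ∫⁻ z, (∫⁻ y in ball x r, f (y - z)) ∂μ :=
      lintegral_lintegral_swap hmeasYZ.aemeasurable
    have htrans : ∀ z : E (m+1), (∫⁻ y in ball x r, f (y - z)) = ∫⁻ u in ball (x - z) r, f u := by
      intro z
      have hemb : MeasurableEmbedding (fun y : E (m+1) => y - z) :=
        (MeasurableEquiv.subRight z).measurableEmbedding
      have hmp := measurePreserving_sub_right (volume : Measure (E (m+1))) z
      have h := hmp.setLIntegral_comp_preimage_emb hemb f (ball (x - z) r)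
      have hpre : (fun y : E (m+1) => y - z) ⁻¹' ball (x - z) r = ball x r := by
        ext y
        simp only [mem_preimage, mem_ball, dist_eq_norm, sub_sub_sub_cancel_right]
      rw [hpre] at h
      exact h
    -- per-shell bound
    have hkb : ∀ k, (∫⁻ z, (∫⁻ u in ball (x - z) r, g k u) ∂μ)
        ≤ (ENNReal.ofReal K * A) * (ENNReal.ofReal (r^m) * mk k) := by
      intro k
      set b : ℝ := ε/2^k with hb
      have hb0 : 0 < b := by positivity
      have hbhalf : ε/2^(k+1) = b/2 := by rw [hb, pow_succ]; ring
      have hvan : ∀ z : E (m+1), (∀ u ∈ ball (x - z) r, u ∉ Sh k) →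
          (∫⁻ u in ball (x - z) r, g k u) = 0 := by
        intro z hz
        have h0 : ∫⁻ u in ball (x - z) r, g k u = ∫⁻ u in ball (x - z) r, (0 : ℝ≥0∞) := by
          apply setLIntegral_congr_fun measurableSet_ball
          intro u hu
          exact indicator_of_notMem (hz u hu) f
        rw [h0, lintegral_zero]
      set Dk : ℝ≥0∞ := if 8*r ≤ b then
          mk k / ENNReal.ofReal (2*r*(3*b/8)^m/(3*r)^(m+1)) else mk k with hDk
      have hpt : ∀ z, (∫⁻ u in ball (x - z) r, g k u)
          ≤ (ball x (r+b)).indicator (fun _ => Dk) z := by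
        intro z
        by_cases hz : z ∈ ball x (r + b)
        case neg =>
          rw [indicator_of_notMem hz]
          have h0 : (∫⁻ u in ball (x - z) r, g k u) = 0 := by
            apply hvan
            intro u hu huSh
            apply hz
            simp only [hSh, mem_setOf_eq] at huSh
            rw [mem_ball, dist_eq_norm] at hu ⊢
            have h1 : ‖u‖ ≤ b := huSh.2
            have h3 : ‖x - z‖ ≤ ‖u‖ + ‖u - (x - z)‖ := by
              have h4 := norm_sub_le u (u - (x - z))
              simpa using h4
            rw [norm_sub_rev]
            linarith
          rw [h0]
        case pos =>
          rw [indicator_of_mem hz]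
          by_cases hcase : 8*r ≤ b
          · rw [hDk, if_pos hcase]
            by_cases h0 : (∫⁻ u in ball (x - z) r, g k u) = 0
            · rw [h0]; exact zero_le ..
            · have hex : ∃ u ∈ ball (x - z) r, u ∈ Sh k := by
                by_contra hcon
                push_neg at hcon
                exact h0 (hvan z hcon)
              obtain ⟨u, hu, huSh⟩ := hex
              simp only [hSh, mem_setOf_eq] at huSh
              rw [mem_ball, dist_eq_norm] at hu
              have hxz : b/2 - r < ‖x - z‖ := by
                have h4 := huSh.1
                rw [hbhalf] at h4
                have h5 := norm_sub_norm_le u (x - z)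
                linarith
              have h3r : 3*r ≤ ‖x - z‖ := by linarith
              have hsb := shell_bound (n := m+1) (by omega) (g k) (hgm k) (hgrad k) hr
                (w := x - z) h3r
              simp only [Nat.add_sub_cancel] at hsb
              have hmono : ENNReal.ofReal (2*r*(3*b/8)^m/(3*r)^(m+1)) ≤
                  ENNReal.ofReal (2*r*‖x - z‖^m/(3*r)^(m+1)) := by
                apply ENNReal.ofReal_le_ofReal
                apply (div_le_div_iff_of_pos_right (by positivity)).mpr
                have hple : (3*b/8)^m ≤ ‖x - z‖^m :=
                  pow_le_pow_left₀ (by positivity) (by linarith) m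
                nlinarith [hr.le]
              have hchain : ENNReal.ofReal (2*r*(3*b/8)^m/(3*r)^(m+1)) *
                  (∫⁻ u in ball (x - z) r, g k u) ≤ mk k :=
                le_trans (mul_le_mul_left hmono _) hsb
              rw [ENNReal.le_div_iff_mul_le
                (Or.inl (ENNReal.ofReal_pos.mpr (by positivity)).ne')
                (Or.inl ENNReal.ofReal_ne_top)]
              rw [mul_comm]
              exact hchain
          · rw [hDk, if_neg hcase]
            exact setLIntegral_le_lintegral _ _
      have hDkb : Dk * ENNReal.ofReal ((r+b)^m)
          ≤ ENNReal.ofReal K * (ENNReal.ofReal (r^m) * mk k) := by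
        by_cases hcase : 8*r ≤ b
        · rw [hDk, if_pos hcase]
          set c : ℝ := 2*r*(3*b/8)^m/(3*r)^(m+1) with hc
          have hc0 : 0 < c := by positivity
          have hrb : r ≤ b := by linarith
          have key : ((r+b):ℝ)^m ≤ K * r^m * c := by
            have h1 : ((r+b):ℝ)^m ≤ (2*b)^m :=
              pow_le_pow_left₀ (by positivity) (by linarith) m
            have h2 : K * r^m * c = K * (2*(3/8)^m/3^(m+1)) * b^m := by
              rw [hc]
              field_simp
              ring
            have hKge : (3:ℝ)^(m+1)*(16/3)^m ≤ K := by
              rw [hK]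
              have : (0:ℝ) < 9^m := by positivity
              linarith
            have hcoef : (2:ℝ)^m ≤ K * (2*(3/8)^m/3^(m+1)) := by
              have hmp : ((16:ℝ)/3)^m * (3/8)^m = 2^m := by
                rw [← mul_pow]; norm_num
              have hq : ((3:ℝ)^(m+1)*(16/3)^m) * (2*(3/8)^m/3^(m+1))
                  = 2 * ((16/3)^m * (3/8)^m) := by
                field_simp
              have h6 : ((3:ℝ)^(m+1)*(16/3)^m) * (2*(3/8)^m/3^(m+1)) ≤
                  K * (2*(3/8)^m/3^(m+1)) := by
                apply mul_le_mul_of_nonneg_right hKge (by positivity)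
              rw [hq, hmp] at h6
              nlinarith [pow_pos (by norm_num : (0:ℝ) < 2) m]
            calc ((r+b):ℝ)^m ≤ (2*b)^m := h1
              _ = 2^m * b^m := mul_pow 2 b m
              _ ≤ (K * (2*(3/8)^m/3^(m+1))) * b^m := by
                  apply mul_le_mul_of_nonneg_right hcoef (by positivity)
              _ = K * r^m * c := h2.symm
          calc mk k / ENNReal.ofReal c * ENNReal.ofReal ((r+b)^m)
              ≤ mk k / ENNReal.ofReal c * ENNReal.ofReal (K * r^m * c) :=
                mul_le_mul_right (ENNReal.ofReal_le_ofReal key) _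
            _ = mk k / ENNReal.ofReal c * (ENNReal.ofReal (K * r^m) * ENNReal.ofReal c) := by
                rw [← ENNReal.ofReal_mul (by positivity)]
            _ = mk k / ENNReal.ofReal c * ENNReal.ofReal c * ENNReal.ofReal (K * r^m) := by
                ring
            _ = mk k * ENNReal.ofReal (K * r^m) := by
                rw [ENNReal.div_mul_cancel (ENNReal.ofReal_pos.mpr hc0).ne'
                  ENNReal.ofReal_ne_top]
            _ = ENNReal.ofReal K * (ENNReal.ofReal (r^m) * mk k) := by
                rw [ENNReal.ofReal_mul hKpos.le]
                ring
        · rw [hDk, if_neg hcase]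
          push_neg at hcase
          have key : ENNReal.ofReal ((r+b)^m) ≤ ENNReal.ofReal (K * r^m) := by
            apply ENNReal.ofReal_le_ofReal
            calc ((r+b):ℝ)^m ≤ (9*r)^m :=
                pow_le_pow_left₀ (by positivity) (by linarith) m
              _ = 9^m * r^m := mul_pow 9 r m
              _ ≤ K * r^m := by
                  apply mul_le_mul_of_nonneg_right _ (by positivity)
                  rw [hK]
                  have : (0:ℝ) < 3^(m+1)*(16/3)^m := by positivity
                  linarith
          calc mk k * ENNReal.ofReal ((r+b)^m) ≤ mk k * ENNReal.ofReal (K * r^m) :=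
              mul_le_mul_right key _
            _ = ENNReal.ofReal K * (ENNReal.ofReal (r^m) * mk k) := by
                rw [ENNReal.ofReal_mul hKpos.le]
                ring
      calc (∫⁻ z, (∫⁻ u in ball (x - z) r, g k u) ∂μ)
          ≤ ∫⁻ z, (ball x (r+b)).indicator (fun _ => Dk) z ∂μ := lintegral_mono hpt
        _ = Dk * μ (ball x (r+b)) := lintegral_indicator_const measurableSet_ball Dk
        _ ≤ Dk * (A * ENNReal.ofReal ((r+b)^m)) :=
            mul_le_mul_right (hAb (r+b) (by positivity)) Dk
        _ = A * (Dk * ENNReal.ofReal ((r+b)^m)) := by ring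
        _ ≤ A * (ENNReal.ofReal K * (ENNReal.ofReal (r^m) * mk k)) := mul_le_mul_right hDkb A
        _ = (ENNReal.ofReal K * A) * (ENNReal.ofReal (r^m) * mk k) := by ring
    calc (∫⁻ y in ball x r, ∫⁻ z, f (y - z) ∂μ)
        = ∫⁻ z, (∫⁻ u in ball (x - z) r, f u) ∂μ := by
          rw [hswap]
          exact lintegral_congr fun z => htrans z
      _ = ∫⁻ z, (∑' k, ∫⁻ u in ball (x - z) r, g k u) ∂μ :=
          lintegral_congr fun z => hsplit r (x - z)
      _ = ∑' k, ∫⁻ z, (∫⁻ u in ball (x - z) r, g k u) ∂μ :=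
          lintegral_tsum fun k => (hHm r k).aemeasurable
      _ ≤ ∑' k, (ENNReal.ofReal K * A) * (ENNReal.ofReal (r^m) * mk k) :=
          ENNReal.tsum_le_tsum hkb
      _ = (ENNReal.ofReal K * A) * (ENNReal.ofReal (r^m) * ∑' k, mk k) := by
          rw [ENNReal.tsum_mul_left, ENNReal.tsum_mul_left]
      _ ≤ (ENNReal.ofReal K * A) * (ENNReal.ofReal (r^m) * 1) := by gcongr
      _ = (ENNReal.ofReal K * A) * ENNReal.ofReal (r^m) := by rw [mul_one]
  -- A is controlled by the averaged maximal function
  have hAR : A ≤ ENNReal.ofReal (2^m) * S := by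
    rw [hA]
    unfold fracMax1
    simp only [Nat.add_sub_cancel]
    apply iSup₂_le
    intro t ht
    have hsub : ∀ y ∈ ball x t, ball x t ⊆ ball y (2*t) := by
      intro y hy w hw
      rw [mem_ball] at hw hy ⊢
      calc dist w y ≤ dist w x + dist x y := dist_triangle w x y
        _ < t + t := add_lt_add hw (by rw [dist_comm]; exact hy)
        _ = 2*t := by ring
    have hpt : ∀ y ∈ ball x t, μ (ball x t) / ENNReal.ofReal ((2*t)^m) ≤ fracMax1 μ y := by
      intro y hy
      calc μ (ball x t) / ENNReal.ofReal ((2*t)^m)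
          ≤ μ (ball y (2*t)) / ENNReal.ofReal ((2*t)^m) := by
            gcongr
            exact hsub y hy
        _ ≤ fracMax1 μ y := by
            unfold fracMax1
            simp only [Nat.add_sub_cancel]
            exact le_iSup₂ (f := fun (s : ℝ) (_ : 0 < s) =>
              μ (ball y s) / ENNReal.ofReal (s ^ m)) (2*t) (by positivity)
    have hint : (μ (ball x t) / ENNReal.ofReal ((2*t)^m)) * volume (ball x t)
        ≤ ∫⁻ y in ball x t, fracMax1 μ y := by
      rw [← setLIntegral_const (ball x t) (μ (ball x t) / ENNReal.ofReal ((2*t)^m))]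
      apply lintegral_mono_ae
      exact (ae_restrict_iff' measurableSet_ball).mpr (ae_of_all _ hpt)
    have hvol0 : volume (ball x t) ≠ 0 := (measure_ball_pos volume x ht).ne'
    have hvoltop : volume (ball x t) ≠ ∞ := measure_ball_lt_top.ne
    have h2m0 : ENNReal.ofReal ((2:ℝ)^m) ≠ 0 := (ENNReal.ofReal_pos.mpr (by positivity)).ne'
    have h2mtop : ENNReal.ofReal ((2:ℝ)^m) ≠ ∞ := ENNReal.ofReal_ne_top
    calc μ (ball x t) / ENNReal.ofReal (t^m)
        = ENNReal.ofReal (2^m) * (μ (ball x t) / ENNReal.ofReal ((2*t)^m)) := by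
          rw [mul_pow, ENNReal.ofReal_mul (by positivity), ← mul_div_assoc,
            ENNReal.mul_div_mul_left _ _ h2m0 h2mtop]
      _ ≤ ENNReal.ofReal (2^m) * ((∫⁻ y in ball x t, fracMax1 μ y) / volume (ball x t)) :=
          mul_le_mul_right
            ((ENNReal.le_div_iff_mul_le (Or.inl hvol0) (Or.inl hvoltop)).mpr hint) _
      _ ≤ ENNReal.ofReal (2^m) * S := by
          refine mul_le_mul_right ?_ _
          rw [hS]
          exact le_iSup₂ (f := fun (r : ℝ) (_ : 0 < r) =>
            (∫⁻ y in ball x r, fracMax1 μ y) / volume (ball x r)) t ht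
  -- conclusion
  calc (⨆ (r : ℝ) (_ : 0 < r),
        (∫⁻ y in ball x r,
            ∫⁻ z, ENNReal.ofReal ((ε ^ (m+1))⁻¹ * ρ (ε⁻¹ • (y - z))) ∂μ) /
          ENNReal.ofReal (r ^ m))
      ≤ ENNReal.ofReal K * A := by
        apply iSup₂_le
        intro r hr
        apply ENNReal.div_le_of_le_mul
        exact hmain r hr
    _ ≤ ENNReal.ofReal K * (ENNReal.ofReal (2^m) * S) := mul_le_mul_right hAR _
    _ = ENNReal.ofReal (K * 2^m) * S := by rw [ENNReal.ofReal_mul hKpos.le, mul_assoc]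
end
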